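/- arXiv:2504.17596 — 3 statements merged into one kernel-verified Lean document; each statement's English description precedes it below -/
import Mathlib

section
/- Let x ∈ C and v ∈ R^N with Λ(x; v) := 2 s_x v^T (s_x Q x - c) = 0, where s_x = (c^T x)/(x^T Q x). Then R(x) = min over z ∈ span{x, v} of R(z). -/
open Matrix

noncomputable def Rmap {N : ℕ} (Q : Matrix (Fin N) (Fin N) ℝ) (c α : Fin N → ℝ)
    (x : Fin N → ℝ) : ℝ :=
  if 0 < c ⬝ᵥ x then c ⬝ᵥ α - (c ⬝ᵥ x) ^ 2 / (x ⬝ᵥ Q.mulVec x) else c ⬝ᵥ α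

/-!
The condition `Λ(x; z) = 0`, i.e. `z ⬝ᵥ (s • Q *ᵥ x - c) = 0` with `s = (c ⬝ᵥ x) / (x ⬝ᵥ Q *ᵥ x)`,
is linear in `z`; it holds for `z = x` and for `z = v`, hence on all of `span {x, v}`. There
`c ⬝ᵥ z = s * (z ⬝ᵥ Q *ᵥ x)`, and Cauchy–Schwarz for the semi-inner product of `Q` gives
`(c ⬝ᵥ z) ^ 2 / (z ⬝ᵥ Q *ᵥ z) ≤ s ^ 2 * (x ⬝ᵥ Q *ᵥ x) = (c ⬝ᵥ x) ^ 2 / (x ⬝ᵥ Q *ᵥ x)`.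
-/

namespace Matrix.PosSemidef

variable {n : Type*} [Fintype n] {Q : Matrix n n ℝ}

theorem dotProduct_mulVec_comm (hQ : Q.PosSemidef) (y z : n → ℝ) :
    y ⬝ᵥ Q *ᵥ z = z ⬝ᵥ Q *ᵥ y := by
  rw [dotProduct_mulVec, ← mulVec_transpose, ← conjTranspose_eq_transpose_of_trivial,
    hQ.isHermitian.eq, dotProduct_comm]

theorem dotProduct_mulVec_self_nonneg (hQ : Q.PosSemidef) (y : n → ℝ) :
    0 ≤ y ⬝ᵥ Q *ᵥ y := by
  simpa using hQ.dotProduct_mulVec_nonneg y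

theorem sq_dotProduct_mulVec_le (hQ : Q.PosSemidef) (y z : n → ℝ) :
    (y ⬝ᵥ Q *ᵥ z) ^ 2 ≤ (y ⬝ᵥ Q *ᵥ y) * (z ⬝ᵥ Q *ᵥ z) := by
  have hquad : ∀ t : ℝ, 0 ≤ (z ⬝ᵥ Q *ᵥ z) * (t * t) + 2 * (y ⬝ᵥ Q *ᵥ z) * t
      + y ⬝ᵥ Q *ᵥ y := fun t => by
    have h := hQ.dotProduct_mulVec_self_nonneg (y + t • z)
    simp only [mulVec_add, mulVec_smul, add_dotProduct, dotProduct_add, smul_dotProduct,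
      dotProduct_smul, smul_eq_mul, hQ.dotProduct_mulVec_comm z y] at h
    linarith
  have := discrim_le_zero hquad
  rw [discrim] at this
  linarith

theorem sq_dotProduct_mulVec_div_le (hQ : Q.PosSemidef) (x z : n → ℝ) :
    (z ⬝ᵥ Q *ᵥ x) ^ 2 / (z ⬝ᵥ Q *ᵥ z) ≤ x ⬝ᵥ Q *ᵥ x :=
  div_le_of_le_mul₀ (hQ.dotProduct_mulVec_self_nonneg z) (hQ.dotProduct_mulVec_self_nonneg x)
    ((hQ.sq_dotProduct_mulVec_le z x).trans_eq (mul_comm _ _))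

theorem dotProduct_mulVec_self_pos {c α y : n → ℝ} (hQ : Q.PosSemidef) (hc : c = Q *ᵥ α)
    (hy : 0 < c ⬝ᵥ y) : 0 < y ⬝ᵥ Q *ᵥ y := by
  refine (hQ.dotProduct_mulVec_self_nonneg y).lt_of_ne fun hyQ => hy.ne' ?_
  have hQy : Q *ᵥ y = 0 := (hQ.dotProduct_mulVec_zero_iff y).mp (by simpa using hyQ.symm)
  rw [hc, dotProduct_comm, hQ.dotProduct_mulVec_comm, hQy, dotProduct_zero]

end Matrix.PosSemidef

theorem dotProduct_eq_zero_of_mem_span_pair {n : Type*} [Fintype n] {x v w z : n → ℝ}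
    (hx : x ⬝ᵥ w = 0) (hv : v ⬝ᵥ w = 0) (hz : z ∈ Submodule.span ℝ {x, v}) : z ⬝ᵥ w = 0 := by
  obtain ⟨a, b, rfl⟩ := Submodule.mem_span_pair.mp hz
  simp [add_dotProduct, hx, hv]

theorem Rmap_le_Rmap_of_dotProduct_eq_zero {N : ℕ} {Q : Matrix (Fin N) (Fin N) ℝ}
    {c α x z : Fin N → ℝ} (hQ : Q.PosSemidef) (hc : c = Q *ᵥ α) (hx : 0 < c ⬝ᵥ x)
    (hz : z ⬝ᵥ (((c ⬝ᵥ x) / (x ⬝ᵥ Q *ᵥ x)) • Q *ᵥ x - c) = 0) :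
    Rmap Q c α x ≤ Rmap Q c α z := by
  have hxQ := hQ.dotProduct_mulVec_self_pos hc hx
  set s := (c ⬝ᵥ x) / (x ⬝ᵥ Q *ᵥ x)
  have hcx : c ⬝ᵥ x = s * (x ⬝ᵥ Q *ᵥ x) := (div_mul_cancel₀ _ hxQ.ne').symm
  have hcz : c ⬝ᵥ z = s * (z ⬝ᵥ Q *ᵥ x) := by
    rw [dotProduct_sub, dotProduct_smul, smul_eq_mul, sub_eq_zero, dotProduct_comm z c] at hz
    exact hz.symm
  unfold Rmap
  rw [if_pos hx]
  split_ifs with hzc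
  · refine sub_le_sub_left ?_ _
    calc (c ⬝ᵥ z) ^ 2 / (z ⬝ᵥ Q *ᵥ z) = s ^ 2 * ((z ⬝ᵥ Q *ᵥ x) ^ 2 / (z ⬝ᵥ Q *ᵥ z)) := by
          rw [hcz]; ring
      _ ≤ s ^ 2 * (x ⬝ᵥ Q *ᵥ x) := by gcongr; exact hQ.sq_dotProduct_mulVec_div_le x z
      _ = (c ⬝ᵥ x) ^ 2 / (x ⬝ᵥ Q *ᵥ x) := by rw [hcx]; field_simp
  · have : 0 ≤ (c ⬝ᵥ x) ^ 2 / (x ⬝ᵥ Q *ᵥ x) := by positivity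
    linarith

theorem stmt8_general {N : ℕ} (Q : Matrix (Fin N) (Fin N) ℝ) (hQ : Q.PosSemidef)
    (α : Fin N → ℝ) (c : Fin N → ℝ) (hc : c = Q.mulVec α)
    (x v : Fin N → ℝ) (hx : 0 < c ⬝ᵥ x)
    (hΛ : 2 * ((c ⬝ᵥ x) / (x ⬝ᵥ Q.mulVec x)) *
      (v ⬝ᵥ (((c ⬝ᵥ x) / (x ⬝ᵥ Q.mulVec x)) • Q.mulVec x - c)) = 0) :
    IsLeast {r : ℝ | ∃ z ∈ (Submodule.span ℝ ({x, v} : Set (Fin N → ℝ)) :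
        Set (Fin N → ℝ)), Rmap Q c α z = r} (Rmap Q c α x) := by
  have hxQ := hQ.dotProduct_mulVec_self_pos hc hx
  set s := (c ⬝ᵥ x) / (x ⬝ᵥ Q *ᵥ x)
  have hxw : x ⬝ᵥ (s • Q *ᵥ x - c) = 0 := by
    rw [dotProduct_sub, dotProduct_smul, smul_eq_mul, dotProduct_comm x c,
      div_mul_cancel₀ _ hxQ.ne', sub_self]
  have hvw : v ⬝ᵥ (s • Q *ᵥ x - c) = 0 :=
    (mul_eq_zero.mp hΛ).resolve_left (by positivity)
  refine ⟨⟨x, Submodule.subset_span (by simp), rfl⟩, ?_⟩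
  rintro _ ⟨z, hz, rfl⟩
  exact Rmap_le_Rmap_of_dotProduct_eq_zero hQ hc hx (dotProduct_eq_zero_of_mem_span_pair hxw hvw hz)

theorem stmt8 {N : ℕ} (Q : Matrix (Fin N) (Fin N) ℝ) (hQ : Q.PosSemidef)
    (α : Fin N → ℝ) (c : Fin N → ℝ) (hc : c = Q.mulVec α) (hc0 : c ≠ 0)
    (x v : Fin N → ℝ) (hx : 0 < c ⬝ᵥ x)
    (hΛ : 2 * ((c ⬝ᵥ x) / (x ⬝ᵥ Q.mulVec x)) *
      (v ⬝ᵥ (((c ⬝ᵥ x) / (x ⬝ᵥ Q.mulVec x)) • Q.mulVec x - c)) = 0) :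
    IsLeast {r : ℝ | ∃ z ∈ (Submodule.span ℝ ({x, v} : Set (Fin N → ℝ)) :
        Set (Fin N → ℝ)), Rmap Q c α z = r} (Rmap Q c α x) :=
  stmt8_general Q hQ α c hc x v hx hΛ
end

section
/- Let x ∈ C and v ∈ R^N with Qx and Qv non-collinear. Then the improvement I_R(x;v) := R(x) - min over z ∈ span{x,v} of R(z) equals (v^T(s_x Q x - c))^2 / ((v^T Q v) - (v^T Q x)^2/(x^T Q x)), where s_x = (c^T x)/(x^T Q x). If Qx and Qv are collinear, then I_R(x;v) = 0. -/
/-! On the plane `span {x, v}` the improvement is governed by the maximum of the ratio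
`(cᵀz)² / zᵀQz`, since `R z = cᵀα - (cᵀz)² / zᵀQz` wherever `cᵀz > 0`. Writing `z = a x + b v`,
this is a ratio of a squared linear form and the quadratic form of the Gram matrix
`G = [[xᵀQx, xᵀQv], [xᵀQv, vᵀQv]]`. When `Qx, Qv` are independent, `G` is positive definite and the
2×2 Cauchy–Schwarz (Lagrange) identity gives the maximum `uᵀG⁻¹u` with `u = (cᵀx, cᵀv)`, attained
at `G⁻¹u`; subtracting the value `(cᵀx)² / xᵀQx` at `x` leaves the stated Schur-complement
quotient. When `Qv` is a multiple of `Qx`, every `z` in the plane has `Qz = s • Qx`, and since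
`c = Qα` the ratio takes the same value at every `z` with `cᵀz > 0`. -/

open Matrix

/-- Improvement of an exact line search of `R` from `x` along `v`:
`R(x) - min_{z ∈ span{x,v}} R(z)`. -/
noncomputable def IR {N : ℕ} (Q : Matrix (Fin N) (Fin N) ℝ) (c α : Fin N → ℝ)
    (x v : Fin N → ℝ) : ℝ :=
  Rmap Q c α x -
    sInf (Rmap Q c α '' (Submodule.span ℝ ({x, v} : Set (Fin N → ℝ)) :
      Set (Fin N → ℝ)))

section QuadraticForm

variable {n : Type*} [Fintype n] {Q : Matrix n n ℝ}

lemma Matrix.IsSymm.dotProduct_mulVec_comm (hQ : Q.IsSymm) (a b : n → ℝ) :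
    a ⬝ᵥ Q *ᵥ b = b ⬝ᵥ Q *ᵥ a := by
  rw [dotProduct_mulVec, ← mulVec_transpose, hQ.eq, dotProduct_comm]

lemma Matrix.IsSymm.quadForm_add_smul (hQ : Q.IsSymm) (a b : ℝ) (x v : n → ℝ) :
    (a • x + b • v) ⬝ᵥ Q *ᵥ (a • x + b • v) =
      a ^ 2 * (x ⬝ᵥ Q *ᵥ x) + 2 * a * b * (x ⬝ᵥ Q *ᵥ v) + b ^ 2 * (v ⬝ᵥ Q *ᵥ v) := by
  simp only [mulVec_add, mulVec_smul, dotProduct_add, add_dotProduct, dotProduct_smul,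
    smul_dotProduct, smul_eq_mul, hQ.dotProduct_mulVec_comm v x]
  ring

lemma Matrix.IsSymm.mulVec_dotProduct (hQ : Q.IsSymm) (a b : n → ℝ) :
    Q *ᵥ a ⬝ᵥ b = a ⬝ᵥ Q *ᵥ b := by
  rw [dotProduct_comm, hQ.dotProduct_mulVec_comm]

lemma Matrix.IsSymm.dotProduct_of_mulVec_eq_smul (hQ : Q.IsSymm) {α x z : n → ℝ} {s : ℝ}
    (hz : Q *ᵥ z = s • Q *ᵥ x) :
    Q *ᵥ α ⬝ᵥ z = s * (Q *ᵥ α ⬝ᵥ x) ∧ z ⬝ᵥ Q *ᵥ z = s ^ 2 * (x ⬝ᵥ Q *ᵥ x) := by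
  refine ⟨by rw [hQ.mulVec_dotProduct, hQ.mulVec_dotProduct, hz, dotProduct_smul, smul_eq_mul], ?_⟩
  rw [hz, dotProduct_smul, hQ.dotProduct_mulVec_comm, hz, dotProduct_smul, smul_eq_mul,
    smul_eq_mul]
  ring

lemma Matrix.PosSemidef.quadForm_pos_of_mulVec_ne_zero (hQ : Q.PosSemidef) {z : n → ℝ}
    (hz : Q *ᵥ z ≠ 0) : 0 < z ⬝ᵥ Q *ᵥ z := by
  have hnonneg : 0 ≤ z ⬝ᵥ Q *ᵥ z := by simpa using hQ.dotProduct_mulVec_nonneg z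
  refine hnonneg.lt_of_ne' fun h => hz ?_
  exact (hQ.dotProduct_mulVec_zero_iff z).mp (by simpa using h)

lemma Matrix.PosSemidef.quadForm_pos_of_dotProduct_pos (hQ : Q.PosSemidef) {α z : n → ℝ}
    (hz : 0 < Q *ᵥ α ⬝ᵥ z) : 0 < z ⬝ᵥ Q *ᵥ z := by
  refine hQ.quadForm_pos_of_mulVec_ne_zero fun h => hz.ne' ?_
  rw [(isHermitian_iff_isSymm.mp hQ.1).mulVec_dotProduct, h, dotProduct_zero]

lemma Matrix.PosSemidef.quadForm_pos_of_linearIndependent (hQ : Q.PosSemidef) {x v : n → ℝ}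
    (hli : LinearIndependent ℝ ![Q *ᵥ x, Q *ᵥ v]) {a b : ℝ} (hab : a ≠ 0 ∨ b ≠ 0) :
    0 < (a • x + b • v) ⬝ᵥ Q *ᵥ (a • x + b • v) := by
  refine hQ.quadForm_pos_of_mulVec_ne_zero fun h => ?_
  rw [mulVec_add, mulVec_smul, mulVec_smul] at h
  obtain ⟨rfl, rfl⟩ := LinearIndependent.pair_iff.mp hli a b h
  simp at hab

lemma Matrix.PosSemidef.gram_det_pos (hQ : Q.PosSemidef) {x v : n → ℝ}
    (hli : LinearIndependent ℝ ![Q *ᵥ x, Q *ᵥ v]) :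
    0 < x ⬝ᵥ Q *ᵥ x ∧ 0 < (x ⬝ᵥ Q *ᵥ x) * (v ⬝ᵥ Q *ᵥ v) - (x ⬝ᵥ Q *ᵥ v) ^ 2 := by
  have hS : Q.IsSymm := isHermitian_iff_isSymm.mp hQ.1
  have hA := hQ.quadForm_pos_of_linearIndependent hli (a := 1) (b := 0) (by simp)
  rw [hS.quadForm_add_smul] at hA
  replace hA : 0 < x ⬝ᵥ Q *ᵥ x := by linarith
  have hw := hQ.quadForm_pos_of_linearIndependent hli
    (a := x ⬝ᵥ Q *ᵥ v) (b := -(x ⬝ᵥ Q *ᵥ x)) (Or.inr (neg_ne_zero.mpr hA.ne'))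
  rw [hS.quadForm_add_smul] at hw
  refine ⟨hA, pos_of_mul_pos_right (a := x ⬝ᵥ Q *ᵥ x) ?_ hA.le⟩
  linarith

end QuadraticForm

lemma sq_mul_gram_le (a b p r A B D : ℝ) :
    (a * p + b * r) ^ 2 * (A * D - B ^ 2) ≤
      (D * p ^ 2 - 2 * B * p * r + A * r ^ 2) * (a ^ 2 * A + 2 * a * b * B + b ^ 2 * D) := by
  have lagrange :
      (D * p ^ 2 - 2 * B * p * r + A * r ^ 2) * (a ^ 2 * A + 2 * a * b * B + b ^ 2 * D) =
        (a * p + b * r) ^ 2 * (A * D - B ^ 2) +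
          (a * (A * r - B * p) + b * (B * r - D * p)) ^ 2 := by
    ring
  rw [lagrange]
  exact le_add_of_nonneg_right (sq_nonneg _)

lemma gram_quotient_sub_eq {p r A B D : ℝ} (hA : A ≠ 0) (hdet : A * D - B ^ 2 ≠ 0) :
    (D * p ^ 2 - 2 * B * p * r + A * r ^ 2) / (A * D - B ^ 2) - p ^ 2 / A
      = (p / A * B - r) ^ 2 / (D - B ^ 2 / A) := by
  have hD : D - B ^ 2 / A = (A * D - B ^ 2) / A := by field_simp
  rw [hD]
  generalize hE : A * D - B ^ 2 = E at hdet ⊢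
  field_simp
  rw [← hE]
  ring

section LineSearch

variable {N : ℕ} {Q : Matrix (Fin N) (Fin N) ℝ} {c α x v : Fin N → ℝ}

lemma IR_eq_of_isGreatest {m : ℝ} (hm : 0 ≤ m) (hx : 0 < c ⬝ᵥ x) {z₀ : Fin N → ℝ}
    (hz₀ : z₀ ∈ Submodule.span ℝ {x, v}) (hcz₀ : 0 < c ⬝ᵥ z₀)
    (hm₀ : (c ⬝ᵥ z₀) ^ 2 / (z₀ ⬝ᵥ Q *ᵥ z₀) = m)
    (hle : ∀ z ∈ Submodule.span ℝ {x, v}, 0 < c ⬝ᵥ z → (c ⬝ᵥ z) ^ 2 / (z ⬝ᵥ Q *ᵥ z) ≤ m) :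
    IR Q c α x v = m - (c ⬝ᵥ x) ^ 2 / (x ⬝ᵥ Q *ᵥ x) := by
  have hleast : IsLeast (Rmap Q c α '' (Submodule.span ℝ {x, v} : Set (Fin N → ℝ)))
      (c ⬝ᵥ α - m) := by
    refine ⟨⟨z₀, hz₀, by rw [Rmap, if_pos hcz₀, hm₀]⟩, ?_⟩
    rintro _ ⟨z, hz, rfl⟩
    unfold Rmap
    split_ifs with hcz
    · linarith [hle z hz hcz]
    · linarith
  rw [IR, hleast.csInf_eq, Rmap, if_pos hx]
  ring

lemma IR_eq_of_linearIndependent (hQ : Q.PosSemidef) (hx : 0 < c ⬝ᵥ x)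
    (hli : LinearIndependent ℝ ![Q *ᵥ x, Q *ᵥ v]) :
    IR Q c α x v
      = (v ⬝ᵥ (((c ⬝ᵥ x) / (x ⬝ᵥ Q *ᵥ x)) • Q *ᵥ x - c)) ^ 2 /
        ((v ⬝ᵥ Q *ᵥ v) - (v ⬝ᵥ Q *ᵥ x) ^ 2 / (x ⬝ᵥ Q *ᵥ x)) := by
  have hS : Q.IsSymm := isHermitian_iff_isSymm.mp hQ.1
  obtain ⟨hA, hdet⟩ := hQ.gram_det_pos hli
  have hq : ∀ a b : ℝ, (a • x + b • v) ⬝ᵥ Q *ᵥ (a • x + b • v)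
      = a ^ 2 * (x ⬝ᵥ Q *ᵥ x) + 2 * a * b * (x ⬝ᵥ Q *ᵥ v) + b ^ 2 * (v ⬝ᵥ Q *ᵥ v) :=
    fun a b => hS.quadForm_add_smul a b x v
  have hc : ∀ a b : ℝ, c ⬝ᵥ (a • x + b • v) = a * (c ⬝ᵥ x) + b * (c ⬝ᵥ v) := fun a b => by
    simp only [dotProduct_add, dotProduct_smul, smul_eq_mul]
  simp only [dotProduct_sub, dotProduct_smul, smul_eq_mul, hS.dotProduct_mulVec_comm v x,
    dotProduct_comm v c]
  set A := x ⬝ᵥ Q *ᵥ x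
  set B := x ⬝ᵥ Q *ᵥ v
  set D := v ⬝ᵥ Q *ᵥ v
  set p := c ⬝ᵥ x
  set r := c ⬝ᵥ v
  set K := D * p ^ 2 - 2 * B * p * r + A * r ^ 2
  have hK : 0 < K := by
    have hAK : A * K = (A * r - B * p) ^ 2 + (A * D - B ^ 2) * p ^ 2 := by ring
    refine pos_of_mul_pos_right ?_ hA.le
    rw [hAK]
    exact add_pos_of_nonneg_of_pos (sq_nonneg _) (mul_pos hdet (pow_pos hx 2))
  -- the maximiser `G⁻¹ u`, scaled by `det G`
  have hcz₀ : c ⬝ᵥ ((D * p - B * r) • x + (A * r - B * p) • v) = K := by rw [hc]; ring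
  have hqz₀ : ((D * p - B * r) • x + (A * r - B * p) • v) ⬝ᵥ
      Q *ᵥ ((D * p - B * r) • x + (A * r - B * p) • v) = K * (A * D - B ^ 2) := by rw [hq]; ring
  rw [IR_eq_of_isGreatest (m := K / (A * D - B ^ 2)) (by positivity) hx
    (Submodule.mem_span_pair.mpr ⟨_, _, rfl⟩) (hcz₀ ▸ hK)]
  · exact gram_quotient_sub_eq hA.ne' hdet.ne'
  · rw [hcz₀, hqz₀, sq, mul_div_mul_left _ _ hK.ne']
  · intro z hz hcz
    obtain ⟨a, b, rfl⟩ := Submodule.mem_span_pair.mp hz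
    rw [div_le_div_iff₀ (hQ.quadForm_pos_of_linearIndependent hli ?_) hdet, hc, hq]
    · exact sq_mul_gram_le a b p r A B D
    · by_contra! hab
      simp [hab.1, hab.2] at hcz

lemma IR_eq_zero_of_not_linearIndependent (hQ : Q.PosSemidef) (hc : c = Q *ᵥ α)
    (hx : 0 < c ⬝ᵥ x) (hli : ¬ LinearIndependent ℝ ![Q *ᵥ x, Q *ᵥ v]) :
    IR Q c α x v = 0 := by
  subst hc
  have hS : Q.IsSymm := isHermitian_iff_isSymm.mp hQ.1
  have hA : 0 < x ⬝ᵥ Q *ᵥ x := hQ.quadForm_pos_of_dotProduct_pos hx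
  have hQx : Q *ᵥ x ≠ 0 := fun h => by simp [h] at hA
  obtain ⟨t, ht⟩ : ∃ t : ℝ, t • Q *ᵥ x = Q *ᵥ v := by
    simpa [LinearIndependent.pair_iff' hQx] using hli
  rw [IR_eq_of_isGreatest (z₀ := x) (by positivity) hx (Submodule.subset_span (by simp)) hx rfl,
    sub_self]
  intro z hz hcz
  obtain ⟨a, b, rfl⟩ := Submodule.mem_span_pair.mp hz
  obtain ⟨hcz', hqz⟩ := hS.dotProduct_of_mulVec_eq_smul (α := α) (x := x) (z := a • x + b • v)
    (s := a + b * t) (by rw [mulVec_add, mulVec_smul, mulVec_smul, ← ht, smul_smul, add_smul])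
  have hs : a + b * t ≠ 0 := fun h => by simp [hcz', h] at hcz
  rw [hcz', hqz, mul_pow, mul_div_mul_left _ _ (pow_ne_zero 2 hs)]

end LineSearch

theorem stmt14_general {N : ℕ} (Q : Matrix (Fin N) (Fin N) ℝ) (hQ : Q.PosSemidef)
    (α : Fin N → ℝ) (c : Fin N → ℝ) (hc : c = Q.mulVec α)
    (x v : Fin N → ℝ) (hx : 0 < c ⬝ᵥ x) :
    (LinearIndependent ℝ ![Q.mulVec x, Q.mulVec v] →
      IR Q c α x v
        = (v ⬝ᵥ (((c ⬝ᵥ x) / (x ⬝ᵥ Q.mulVec x)) • Q.mulVec x - c)) ^ 2 /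
          ((v ⬝ᵥ Q.mulVec v) - (v ⬝ᵥ Q.mulVec x) ^ 2 / (x ⬝ᵥ Q.mulVec x))) ∧
    (¬ LinearIndependent ℝ ![Q.mulVec x, Q.mulVec v] → IR Q c α x v = 0) :=
  ⟨IR_eq_of_linearIndependent hQ hx, IR_eq_zero_of_not_linearIndependent hQ hc hx⟩

theorem stmt14 {N : ℕ} (Q : Matrix (Fin N) (Fin N) ℝ) (hQ : Q.PosSemidef)
    (α : Fin N → ℝ) (c : Fin N → ℝ) (hc : c = Q.mulVec α) (hc0 : c ≠ 0)
    (x v : Fin N → ℝ) (hx : 0 < c ⬝ᵥ x) :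
    (LinearIndependent ℝ ![Q.mulVec x, Q.mulVec v] →
      IR Q c α x v
        = (v ⬝ᵥ (((c ⬝ᵥ x) / (x ⬝ᵥ Q.mulVec x)) • Q.mulVec x - c)) ^ 2 /
          ((v ⬝ᵥ Q.mulVec v) - (v ⬝ᵥ Q.mulVec x) ^ 2 / (x ⬝ᵥ Q.mulVec x))) ∧
    (¬ LinearIndependent ℝ ![Q.mulVec x, Q.mulVec v] → IR Q c α x v = 0) :=
  stmt14_general Q hQ α c hc x v hx
end

section
/- Suppose Q_{ii} > 0 for all i. Let x⁰ ∈ R^N, and define the coordinate-descent iterates x^{k+1} = x^k + ρ^k e_{i_k}, where i_k maximises [Qx^k - c]_i^2 / Q_{ii} over i ∈ [N] and ρ^k = -[Qx^k - c]_{i_k} / Q_{i_k,i_k}. Then D(x^k) ≤ (1 - ι_Q)^k D(x⁰) for all k, where ι_Q = λ_min⁺(Q)/(N max_i Q_{ii}); in particular D(x^k) → 0. -/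
/-!
With `y = x - α` we have `D(x) = yᵀ Q y` and `Q x - c = Q y`. An exact coordinate step along
`e_i` lowers `D` by `(Qy)_i² / Q_ii`, and the greedy choice of `i` makes this at least
`‖Qy‖² / tr Q ≥ ‖Qy‖² / (N max_i Q_ii)`. Every eigenvalue `μ` of `Q` is `0` or at least `λ_min⁺`,
so `μ² ≥ λ_min⁺ μ`, i.e. `Q² ⪰ λ_min⁺ Q`, which gives `‖Qy‖² ≥ λ_min⁺ yᵀ Q y`. Hence each step
multiplies `D` by at most `1 - ι_Q`, and `0 < ι_Q ≤ 1` because `λ_min⁺ ≤ tr Q ≤ N max_i Q_ii`.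
-/

open Matrix

noncomputable def Dmap {N : ℕ} (Q : Matrix (Fin N) (Fin N) ℝ) (c α : Fin N → ℝ)
    (x : Fin N → ℝ) : ℝ :=
  x ⬝ᵥ Q.mulVec x - 2 * (c ⬝ᵥ x) + c ⬝ᵥ α

/-- Smallest nonzero eigenvalue of `Q`. -/
noncomputable def lamMinPos {N : ℕ} (Q : Matrix (Fin N) (Fin N) ℝ) : ℝ :=
  sInf {μ : ℝ | μ ∈ spectrum ℝ Q ∧ μ ≠ 0}

/-- `ι_Q = λ_min⁺(Q) / (N · max_i Q_{ii})`. -/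
noncomputable def iotaQ {N : ℕ} (Q : Matrix (Fin N) (Fin N) ℝ) : ℝ :=
  lamMinPos Q / (N * ⨆ i, Q i i)

namespace Matrix

section

variable {n : Type*} [Fintype n] {Q : Matrix n n ℝ}

lemma IsHermitian.dotProduct_mulVec_comm (hQ : Q.IsHermitian) (v w : n → ℝ) :
    v ⬝ᵥ Q *ᵥ w = Q *ᵥ v ⬝ᵥ w := by
  rw [dotProduct_mulVec, ← mulVec_transpose, ← conjTranspose_eq_transpose_of_trivial, hQ.eq]

lemma IsHermitian.dotProduct_mulVec_add_smul_single [DecidableEq n] (hQ : Q.IsHermitian)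
    (y : n → ℝ) (t : ℝ) (i : n) :
    (y + t • Pi.single i 1) ⬝ᵥ Q *ᵥ (y + t • Pi.single i 1)
      = y ⬝ᵥ Q *ᵥ y + 2 * t * (Q *ᵥ y) i + t ^ 2 * Q i i := by
  have hei : Pi.single i 1 ⬝ᵥ Q *ᵥ y = (Q *ᵥ y) i := by rw [single_dotProduct, one_mul]
  have hii : Pi.single i 1 ⬝ᵥ Q *ᵥ Pi.single i 1 = Q i i := by
    rw [single_dotProduct, one_mul, mulVec_single_one, col_apply]
  have hie : y ⬝ᵥ Q *ᵥ Pi.single i 1 = (Q *ᵥ y) i := by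
    rw [hQ.dotProduct_mulVec_comm, dotProduct_comm, hei]
  rw [mulVec_add, mulVec_smul, dotProduct_add, add_dotProduct, add_dotProduct, dotProduct_smul,
    dotProduct_smul, smul_dotProduct, smul_dotProduct, hei, hii, hie, smul_eq_mul, smul_eq_mul,
    smul_eq_mul]
  ring

lemma IsHermitian.dotProduct_mulVec_exact_line_search [DecidableEq n] (hQ : Q.IsHermitian)
    (y : n → ℝ) {i : n} (hi : Q i i ≠ 0) :
    (y + (-(Q *ᵥ y) i / Q i i) • Pi.single i 1) ⬝ᵥ
        Q *ᵥ (y + (-(Q *ᵥ y) i / Q i i) • Pi.single i 1)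
      = y ⬝ᵥ Q *ᵥ y - (Q *ᵥ y) i ^ 2 / Q i i := by
  rw [hQ.dotProduct_mulVec_add_smul_single]
  field_simp
  ring

lemma trace_le_card_mul_iSup_diag (Q : Matrix n n ℝ) :
    Q.trace ≤ Fintype.card n * ⨆ i, Q i i := by
  have hle : ∀ j, Q j j ≤ ⨆ i, Q i i := le_ciSup (Set.finite_range _).bddAbove
  simpa [trace] using Finset.sum_le_card_nsmul Finset.univ (fun j => Q j j) _ fun j _ => hle j

lemma sum_sq_le_mul_trace {g : n → ℝ} {M : ℝ} (hdiag : ∀ j, 0 < Q j j)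
    (hg : ∀ j, g j ^ 2 / Q j j ≤ M) :
    ∑ j, g j ^ 2 ≤ M * Q.trace := by
  rw [trace, Finset.mul_sum]
  exact Finset.sum_le_sum fun j _ => by simpa [div_le_iff₀ (hdiag j)] using hg j

end

section

variable {N : ℕ} {Q : Matrix (Fin N) (Fin N) ℝ}

lemma lamMinPos_le {μ : ℝ} (hμ : μ ∈ spectrum ℝ Q) (hμ0 : μ ≠ 0) :
    lamMinPos Q ≤ μ :=
  csInf_le (Q.finite_real_spectrum.subset fun _ h => h.1).bddBelow ⟨hμ, hμ0⟩

lemma lamMinPos_mem (hQ : Q.IsHermitian) (hQ0 : Q ≠ 0) :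
    lamMinPos Q ∈ spectrum ℝ Q ∧ lamMinPos Q ≠ 0 := by
  obtain ⟨i, hi⟩ := Function.ne_iff.mp (mt hQ.eigenvalues_eq_zero_iff.mp hQ0)
  have hne : {μ : ℝ | μ ∈ spectrum ℝ Q ∧ μ ≠ 0}.Nonempty :=
    ⟨_, hQ.eigenvalues_mem_spectrum_real i, hi⟩
  exact hne.csInf_mem (Q.finite_real_spectrum.subset fun _ h => h.1)

lemma PosSemidef.lamMinPos_pos (hQ : Q.PosSemidef) (hQ0 : Q ≠ 0) : 0 < lamMinPos Q := by
  obtain ⟨hmem, hne⟩ := lamMinPos_mem hQ.1 hQ0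
  rw [hQ.1.spectrum_real_eq_range_eigenvalues] at hmem
  obtain ⟨i, hi⟩ := hmem
  exact lt_of_le_of_ne (hi ▸ hQ.eigenvalues_nonneg i) hne.symm

lemma PosSemidef.lamMinPos_le_trace (hQ : Q.PosSemidef) (hQ0 : Q ≠ 0) :
    lamMinPos Q ≤ Q.trace := by
  obtain ⟨i, hi⟩ : lamMinPos Q ∈ Set.range hQ.1.eigenvalues :=
    hQ.1.spectrum_real_eq_range_eigenvalues ▸ (lamMinPos_mem hQ.1 hQ0).1
  rw [hQ.1.trace_eq_sum_eigenvalues, ← hi]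
  simpa using Finset.single_le_sum (fun j _ => hQ.eigenvalues_nonneg j) (Finset.mem_univ i)

open scoped MatrixOrder in
lemma PosSemidef.mul_self_sub_lamMinPos_smul (hQ : Q.PosSemidef) :
    (Q * Q - lamMinPos Q • Q).PosSemidef := by
  have hsa : IsSelfAdjoint Q := hQ.1
  have hcfc : cfc (fun μ : ℝ => μ * μ - lamMinPos Q * μ) Q = Q * Q - lamMinPos Q • Q := by
    rw [cfc_sub (fun μ : ℝ => μ * μ) (fun μ => lamMinPos Q * μ) Q,
      cfc_mul (fun μ : ℝ => μ) (fun μ => μ) Q, cfc_const_mul (lamMinPos Q) (fun μ : ℝ => μ) Q,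
      cfc_id' ℝ Q]
  rw [← nonneg_iff_posSemidef, ← hcfc]
  refine cfc_nonneg fun μ hμ => ?_
  have hμ0 : 0 ≤ μ := spectrum_nonneg_of_nonneg hQ.nonneg hμ
  rcases eq_or_ne μ 0 with rfl | hne
  · simp
  · nlinarith [lamMinPos_le hμ hne]

lemma PosSemidef.lamMinPos_mul_dotProduct_mulVec_le (hQ : Q.PosSemidef) (y : Fin N → ℝ) :
    lamMinPos Q * (y ⬝ᵥ Q *ᵥ y) ≤ Q *ᵥ y ⬝ᵥ Q *ᵥ y := by
  have h := hQ.mul_self_sub_lamMinPos_smul.dotProduct_mulVec_nonneg y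
  rw [star_trivial, sub_mulVec, ← mulVec_mulVec, smul_mulVec, dotProduct_sub, dotProduct_smul,
    smul_eq_mul, hQ.1.dotProduct_mulVec_comm y (Q *ᵥ y)] at h
  linarith

lemma PosSemidef.lamMinPos_le_card_mul_iSup_diag (hQ : Q.PosSemidef) (hQ0 : Q ≠ 0) :
    lamMinPos Q ≤ N * ⨆ i, Q i i := by
  simpa using (hQ.lamMinPos_le_trace hQ0).trans (trace_le_card_mul_iSup_diag Q)

lemma PosSemidef.card_mul_iSup_diag_pos (hQ : Q.PosSemidef) (hQ0 : Q ≠ 0) :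
    0 < N * ⨆ i, Q i i :=
  (hQ.lamMinPos_pos hQ0).trans_le (hQ.lamMinPos_le_card_mul_iSup_diag hQ0)

lemma iotaQ_pos (hQ : Q.PosSemidef) (hQ0 : Q ≠ 0) : 0 < iotaQ Q :=
  div_pos (hQ.lamMinPos_pos hQ0) (hQ.card_mul_iSup_diag_pos hQ0)

lemma iotaQ_le_one (hQ : Q.PosSemidef) (hQ0 : Q ≠ 0) : iotaQ Q ≤ 1 :=
  (div_le_one (hQ.card_mul_iSup_diag_pos hQ0)).mpr (hQ.lamMinPos_le_card_mul_iSup_diag hQ0)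

end

end Matrix

section

variable {N : ℕ} {Q : Matrix (Fin N) (Fin N) ℝ}

lemma Dmap_mulVec_eq (hQ : Q.IsHermitian) (α x : Fin N → ℝ) :
    Dmap Q (Q *ᵥ α) α x = (x - α) ⬝ᵥ Q *ᵥ (x - α) := by
  have hαx : α ⬝ᵥ Q *ᵥ x = x ⬝ᵥ Q *ᵥ α := by rw [hQ.dotProduct_mulVec_comm, dotProduct_comm]
  rw [Dmap, mulVec_sub, dotProduct_sub, sub_dotProduct, sub_dotProduct, hαx,
    dotProduct_comm (Q *ᵥ α) x, dotProduct_comm (Q *ᵥ α) α]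
  ring

lemma Dmap_mulVec_nonneg (hQ : Q.PosSemidef) (α x : Fin N → ℝ) : 0 ≤ Dmap Q (Q *ᵥ α) α x := by
  simpa [Dmap_mulVec_eq hQ.1] using hQ.dotProduct_mulVec_nonneg (x - α)

lemma Dmap_mulVec_coordinate_step (hQ : Q.IsHermitian) (α x : Fin N → ℝ) {i : Fin N}
    (hi : Q i i ≠ 0) :
    Dmap Q (Q *ᵥ α) α (x + (-(Q *ᵥ x - Q *ᵥ α) i / Q i i) • Pi.single i 1)
      = Dmap Q (Q *ᵥ α) α x - (Q *ᵥ x - Q *ᵥ α) i ^ 2 / Q i i := by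
  rw [Dmap_mulVec_eq hQ, Dmap_mulVec_eq hQ, ← mulVec_sub, add_sub_right_comm,
    hQ.dotProduct_mulVec_exact_line_search _ hi]

lemma iotaQ_mul_Dmap_mulVec_le (hQ : Q.PosSemidef) (hQ0 : Q ≠ 0) (hdiag : ∀ j, 0 < Q j j)
    (α x : Fin N → ℝ) {i : Fin N}
    (hsel : ∀ j, (Q *ᵥ x - Q *ᵥ α) j ^ 2 / Q j j ≤ (Q *ᵥ x - Q *ᵥ α) i ^ 2 / Q i i) :
    iotaQ Q * Dmap Q (Q *ᵥ α) α x ≤ (Q *ᵥ x - Q *ᵥ α) i ^ 2 / Q i i := by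
  set M := (Q *ᵥ x - Q *ᵥ α) i ^ 2 / Q i i
  have hM : 0 ≤ M := div_nonneg (sq_nonneg _) (hdiag i).le
  have hlam : lamMinPos Q * Dmap Q (Q *ᵥ α) α x ≤ M * (N * ⨆ j, Q j j) :=
    calc lamMinPos Q * Dmap Q (Q *ᵥ α) α x
        ≤ Q *ᵥ (x - α) ⬝ᵥ Q *ᵥ (x - α) := by
          rw [Dmap_mulVec_eq hQ.1]; exact hQ.lamMinPos_mul_dotProduct_mulVec_le _
      _ = ∑ j, (Q *ᵥ x - Q *ᵥ α) j ^ 2 := by simp [mulVec_sub, dotProduct, sq]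
      _ ≤ M * Q.trace := sum_sq_le_mul_trace hdiag hsel
      _ ≤ M * (N * ⨆ j, Q j j) := by
          simpa using mul_le_mul_of_nonneg_left (trace_le_card_mul_iSup_diag Q) hM
  rw [iotaQ, div_mul_eq_mul_div, div_le_iff₀ (hQ.card_mul_iSup_diag_pos hQ0)]
  linarith

end

theorem stmt19_general {N : ℕ} (Q : Matrix (Fin N) (Fin N) ℝ)
    (hQ : Q.PosSemidef) (hQ0 : Q ≠ 0) (hdiag : ∀ i, 0 < Q i i)
    (α : Fin N → ℝ) (c : Fin N → ℝ) (hc : c = Q.mulVec α)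
    (x : ℕ → Fin N → ℝ) (idx : ℕ → Fin N)
    (hsel : ∀ k, ∀ j : Fin N,
      ((Q.mulVec (x k) - c) j) ^ 2 / Q j j
        ≤ ((Q.mulVec (x k) - c) (idx k)) ^ 2 / Q (idx k) (idx k))
    (hstep : ∀ k, x (k + 1)
      = x k + (-((Q.mulVec (x k) - c) (idx k)) / Q (idx k) (idx k)) •
          (Pi.single (idx k) (1 : ℝ) : Fin N → ℝ)) :
    (∀ k : ℕ, Dmap Q c α (x k) ≤ (1 - iotaQ Q) ^ k * Dmap Q c α (x 0)) ∧
    Filter.Tendsto (fun k => Dmap Q c α (x k)) Filter.atTop (nhds 0) := by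
  subst hc
  set D : ℕ → ℝ := fun k => Dmap Q (Q *ᵥ α) α (x k) with hD
  have hr : 0 ≤ 1 - iotaQ Q := sub_nonneg.2 (iotaQ_le_one hQ hQ0)
  have hcontract : ∀ k, D (k + 1) ≤ (1 - iotaQ Q) * D k := by
    intro k
    simp only [hD]
    rw [hstep k, Dmap_mulVec_coordinate_step hQ.1 _ _ (hdiag _).ne']
    linarith [iotaQ_mul_Dmap_mulVec_le hQ hQ0 hdiag α (x k) (hsel k)]
  have hbound : ∀ k, D k ≤ (1 - iotaQ Q) ^ k * D 0 := fun k => le_geom hr k fun j _ => hcontract j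
  have hlim : Filter.Tendsto (fun k => (1 - iotaQ Q) ^ k * D 0) Filter.atTop (nhds 0) := by
    simpa using (tendsto_pow_atTop_nhds_zero_of_lt_one hr
      (by linarith [iotaQ_pos hQ hQ0])).mul_const (D 0)
  exact ⟨hbound, tendsto_of_tendsto_of_tendsto_of_le_of_le tendsto_const_nhds hlim
    (fun k => Dmap_mulVec_nonneg hQ α (x k)) hbound⟩

theorem stmt19 {N : ℕ} [NeZero N] (Q : Matrix (Fin N) (Fin N) ℝ)
    (hQ : Q.PosSemidef) (hQ0 : Q ≠ 0) (hdiag : ∀ i, 0 < Q i i)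
    (α : Fin N → ℝ) (c : Fin N → ℝ) (hc : c = Q.mulVec α)
    (x : ℕ → Fin N → ℝ) (idx : ℕ → Fin N)
    (hsel : ∀ k, ∀ j : Fin N,
      ((Q.mulVec (x k) - c) j) ^ 2 / Q j j
        ≤ ((Q.mulVec (x k) - c) (idx k)) ^ 2 / Q (idx k) (idx k))
    (hstep : ∀ k, x (k + 1)
      = x k + (-((Q.mulVec (x k) - c) (idx k)) / Q (idx k) (idx k)) •
          (Pi.single (idx k) (1 : ℝ) : Fin N → ℝ)) :
    (∀ k : ℕ, Dmap Q c α (x k) ≤ (1 - iotaQ Q) ^ k * Dmap Q c α (x 0)) ∧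
    Filter.Tendsto (fun k => Dmap Q c α (x k)) Filter.atTop (nhds 0) :=
  stmt19_general Q hQ hQ0 hdiag α c hc x idx hsel hstep
end
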